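/- arXiv:2510.26021 — 7 statements merged into one kernel-verified Lean document; each statement's English description precedes it below -/
import Mathlib

section
/- The 5×10 integer matrix 𝒜 = [I₅ | D], where I₅ is the 5×5 identity matrix and D is the 5×5 integer matrix with D_{jj} = 1, D_{jk} = -1 when j − k ≡ ±1 (mod 5), and D_{jk} = 0 otherwise, is totally unimodular; that is, every square submatrix of 𝒜 has determinant in {−1, 0, 1}. -/
open Matrix

/-- The 5×5 integer matrix `D` with `D j k = 1` if `j = k`, `-1` if `j - k ≡ ±1 (mod 5)`,
and `0` otherwise. -/
def Dmat : Matrix (Fin 5) (Fin 5) ℤ := fun j k =>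
  if j = k then 1
  else if (j : ZMod 5) - (k : ZMod 5) = 1 ∨ (j : ZMod 5) - (k : ZMod 5) = -1 then -1
  else 0

/-- The 5×10 matrix `𝒜 = [I₅ | D]` (columns indexed by `Fin 5 ⊕ Fin 5`). -/
def Amat : Matrix (Fin 5) (Fin 5 ⊕ Fin 5) ℤ :=
  Matrix.fromCols 1 Dmat

/-!
Appending an identity block preserves total unimodularity, so it suffices that `D` is totally
unimodular. Reordering the rows and columns of a square submatrix only changes the sign of its
determinant, so only submatrices with increasing row and column indices need to be checked:
those are the `∑ₖ (5 choose k)² = 252` minors of `D`, which the kernel evaluates.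
-/

theorem SignType.range_cast_eq {α : Type*} [Zero α] [One α] [Neg α] :
    Set.range (SignType.cast : SignType → α) = {-1, 0, 1} := by
  rw [SignType.range_eq]
  simp [Set.insert_comm]

theorem SignType.intUnit_mul_mem_range_cast {R : Type*} [Ring R] (u : ℤˣ) {x : R}
    (hx : x ∈ Set.range SignType.cast) : ((u : ℤ) : R) * x ∈ Set.range SignType.cast := by
  obtain ⟨s, rfl⟩ := hx
  rcases Int.units_eq_one_or u with rfl | rfl
  · exact ⟨s, by simp⟩
  · exact ⟨-s, by simp [SignType.coe_neg]⟩

theorem Fin.exists_eq_succAbove_of_strictMono {n : ℕ} {f : Fin n → Fin (n + 1)}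
    (hf : StrictMono f) : ∃ i, f = Fin.succAbove i := by
  obtain ⟨i, hi⟩ : ∃ i, i ∉ Set.range f := by
    by_contra! h
    simpa using Fintype.card_le_of_surjective f h
  refine ⟨i, (hf.range_inj (Fin.strictMono_succAbove i)).mp ?_⟩
  rw [Fin.range_succAbove]
  refine Set.eq_of_subset_of_ncard_le (fun x hx hxi => hi (hxi ▸ hx)) ?_ (Set.toFinite _)
  rw [Set.ncard_range_of_injective hf.injective, Set.ncard_compl, Set.ncard_singleton]
  simp

namespace Matrix

variable {m n R : Type*} [CommRing R]

theorem det_submatrix_perm_mem_range_cast {k : Type*} [Fintype k] [DecidableEq k]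
    (M : Matrix k k R) (σ τ : Equiv.Perm k) (hM : M.det ∈ Set.range SignType.cast) :
    (M.submatrix σ τ).det ∈ Set.range SignType.cast := by
  have hsub : M.submatrix σ τ = (M.submatrix id τ).submatrix σ id := by
    simp [submatrix_submatrix]
  rw [hsub, det_permute, det_permute']
  exact SignType.intUnit_mul_mem_range_cast _ (SignType.intUnit_mul_mem_range_cast _ hM)

theorem isTotallyUnimodular_of_strictMono [LinearOrder m] [LinearOrder n] {A : Matrix m n R}
    (hA : ∀ (k : ℕ) (f : Fin k → m) (g : Fin k → n), StrictMono f → StrictMono g →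
      (A.submatrix f g).det ∈ Set.range SignType.cast) :
    A.IsTotallyUnimodular := by
  intro k f g hf hg
  set σ := Tuple.sort f
  set τ := Tuple.sort g
  have hsorted := hA k (f ∘ σ) (g ∘ τ)
    ((Tuple.monotone_sort f).strictMono_of_injective (hf.comp σ.injective))
    ((Tuple.monotone_sort g).strictMono_of_injective (hg.comp τ.injective))
  have hsub : A.submatrix f g = (A.submatrix (f ∘ σ) (g ∘ τ)).submatrix σ.symm τ.symm := by
    ext i j
    simp
  rw [hsub]
  exact det_submatrix_perm_mem_range_cast _ _ _ hsorted

end Matrix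

set_option maxRecDepth 20000 in
theorem Dmat_det_submatrix_of_strictMono :
    ∀ (k : ℕ) (f g : Fin k → Fin 5), StrictMono f → StrictMono g →
      (Dmat.submatrix f g).det = -1 ∨ (Dmat.submatrix f g).det = 0 ∨
        (Dmat.submatrix f g).det = 1
  | 0 | 1 | 2 | 3 => by decide
  | 4 => by
      intro f g hf hg
      obtain ⟨i, rfl⟩ := Fin.exists_eq_succAbove_of_strictMono hf
      obtain ⟨j, rfl⟩ := Fin.exists_eq_succAbove_of_strictMono hg
      revert i j
      decide
  | 5 => by
      intro f g hf hg
      rw [hf.eq_id, hg.eq_id]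
      decide
  | k + 6 => by
      intro f _ hf _
      simpa using Fintype.card_le_of_injective f hf.injective

theorem Dmat_isTotallyUnimodular : Dmat.IsTotallyUnimodular :=
  isTotallyUnimodular_of_strictMono fun k f g hf hg => by
    simpa [SignType.range_cast_eq] using Dmat_det_submatrix_of_strictMono k f g hf hg

/-- `𝒜 = [I₅ | D]` is totally unimodular: every square submatrix has
determinant in `{-1, 0, 1}`. -/
theorem stmt_0 :
    ∀ (k : ℕ) (f : Fin k → Fin 5) (g : Fin k → Fin 5 ⊕ Fin 5),
      Function.Injective f → Function.Injective g →
        (Amat.submatrix f g).det ∈ ({-1, 0, 1} : Set ℤ) := by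
  intro k f g hf hg
  rw [← SignType.range_cast_eq]
  exact (one_fromCols_isTotallyUnimodular_iff Dmat).mpr Dmat_isTotallyUnimodular k f g hf hg
end

section
/- The cokernel of K over ℤ, i.e., the quotient group ℤ¹⁰ / (ℤ-span of the columns of K), is isomorphic as an abelian group to (ℤ/3ℤ)⁴ ⊕ (ℤ/2ℤ). In particular it has exactly 162 elements. -/
open Matrix

/-- The 10×10 symmetric integer block matrix `K = [[I₅, D], [D, -I₅]]`, with row and
column index set `Fin 5 ⊕ Fin 5` (so that `ℤ¹⁰` is `Fin 5 ⊕ Fin 5 → ℤ`). -/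
def Kmat : Matrix (Fin 5 ⊕ Fin 5) (Fin 5 ⊕ Fin 5) ℤ :=
  Matrix.fromBlocks 1 Dmat Dmat (-1)

/-!
The map `(x₁, x₂) ↦ x₂ - D x₁` identifies the cokernel of `K = [[1, D], [D, -1]]` with that of
the Schur complement `-1 - D²`. The unimodular matrices `smithLeft` and `smithRight` transform
`-1 - D²` into `diag(2, 3, 3, 3, 3)`, and the cokernel of a diagonal matrix is the product of the
quotients of `ℤ` by its diagonal entries, here `ℤ/2 × (ℤ/3)⁴`.
-/

namespace Matrix

variable {R : Type*} [CommRing R] {l m n : Type*}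

abbrev coker [Fintype n] (M : Matrix m n R) : Type _ := (m → R) ⧸ LinearMap.range M.mulVecLin

theorem range_mulVecLin_mul_of_invertible [Fintype n] [DecidableEq n] (M : Matrix m n R)
    (Q : Matrix n n R) [Invertible Q] :
    LinearMap.range (M * Q).mulVecLin = LinearMap.range M.mulVecLin := by
  rw [mulVecLin_mul]
  refine LinearMap.range_comp_of_range_eq_top _ <|
    LinearMap.range_eq_top.mpr fun y => ⟨⅟Q *ᵥ y, ?_⟩
  simp [mulVec_mulVec]

theorem range_mulVecLin_mul [Fintype m] [Fintype n] (P : Matrix l m R) (M : Matrix m n R) :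
    LinearMap.range (P * M).mulVecLin = (LinearMap.range M.mulVecLin).map P.mulVecLin := by
  rw [mulVecLin_mul, LinearMap.range_comp]

noncomputable def cokerEquivOfInvertible [Fintype m] [Fintype n] [DecidableEq m] [DecidableEq n]
    {M N : Matrix m n R} (P : Matrix m m R) (Q : Matrix n n R) [Invertible P] [Invertible Q]
    (h : P * M * Q = N) : coker M ≃ₗ[R] coker N :=
  Submodule.Quotient.equiv _ _ (P.toLinearEquiv' ‹_›) <| by
    rw [← h, range_mulVecLin_mul_of_invertible, range_mulVecLin_mul]
    rfl

section SchurComplement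

variable {k : Type*} [Fintype m] [Fintype k] (B : Matrix m k R) (C : Matrix n m R)
  (D : Matrix n k R)

def toCokerSchurComplement : (m ⊕ n → R) →ₗ[R] coker (D - C * B) :=
  (LinearMap.range (D - C * B).mulVecLin).mkQ ∘ₗ
    (LinearMap.funLeft R R Sum.inr - C.mulVecLin ∘ₗ LinearMap.funLeft R R Sum.inl)

theorem toCokerSchurComplement_apply (y : m ⊕ n → R) :
    toCokerSchurComplement B C D y = Submodule.Quotient.mk (y ∘ Sum.inr - C *ᵥ (y ∘ Sum.inl)) :=
  rfl

theorem range_fromBlocks_one_mulVecLin_eq_ker [DecidableEq m] :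
    LinearMap.range (fromBlocks 1 B C D).mulVecLin =
      LinearMap.ker (toCokerSchurComplement B C D) := by
  ext y
  simp only [LinearMap.mem_range, LinearMap.mem_ker, toCokerSchurComplement_apply,
    Submodule.Quotient.mk_eq_zero, mulVecLin_apply]
  constructor
  · rintro ⟨x, rfl⟩
    refine ⟨x ∘ Sum.inr, ?_⟩
    simp only [fromBlocks_mulVec, Sum.elim_comp_inl, Sum.elim_comp_inr, one_mulVec, mulVec_add,
      sub_mulVec, mulVec_mulVec]
    abel
  · rintro ⟨v, hv⟩
    refine ⟨Sum.elim (y ∘ Sum.inl - B *ᵥ v) v, ?_⟩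
    rw [fromBlocks_mulVec, Sum.elim_comp_inl, Sum.elim_comp_inr]
    conv_rhs => rw [← Sum.elim_comp_inl_inr y]
    congr 1
    · simp
    · rw [sub_mulVec, ← mulVec_mulVec] at hv
      rw [mulVec_sub]
      linear_combination hv

theorem toCokerSchurComplement_surjective :
    Function.Surjective (toCokerSchurComplement B C D) := by
  intro z
  obtain ⟨v, rfl⟩ := Submodule.mkQ_surjective _ z
  exact ⟨Sum.elim 0 v, by simp [toCokerSchurComplement_apply]⟩

noncomputable def cokerFromBlocksOneEquiv [DecidableEq m] :
    coker (fromBlocks 1 B C D) ≃ₗ[R] coker (D - C * B) :=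
  (Submodule.quotEquivOfEq _ _ (range_fromBlocks_one_mulVecLin_eq_ker B C D)).trans <|
    (toCokerSchurComplement B C D).quotKerEquivOfSurjective
      (toCokerSchurComplement_surjective B C D)

end SchurComplement

theorem range_diagonal_mulVecLin [Fintype m] [DecidableEq m] (d : m → R) :
    LinearMap.range (diagonal d).mulVecLin = Submodule.pi Set.univ fun i => Ideal.span {d i} := by
  ext y
  simp only [LinearMap.mem_range, mulVecLin_apply, funext_iff, mulVec_diagonal,
    Submodule.mem_pi, Set.mem_univ, true_implies, Ideal.mem_span_singleton']
  constructor
  · rintro ⟨x, hx⟩ i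
    exact ⟨x i, by rw [← hx, mul_comm]⟩
  · intro h
    choose x hx using h
    exact ⟨x, fun i => by rw [← hx, mul_comm]⟩

noncomputable def cokerDiagonalEquiv [Fintype m] [DecidableEq m] (d : m → R) :
    coker (diagonal d) ≃ₗ[R] Π i, R ⧸ Ideal.span {d i} :=
  (Submodule.quotEquivOfEq _ _ (range_diagonal_mulVecLin d)).trans (Submodule.quotientPi _)

end Matrix

def smithLeft : Matrix (Fin 5) (Fin 5) ℤ :=
  !![3, 3, 1, -1, -1; -2, -1, 0, 0, 0; 0, 2, 1, 0, 0; -2, -4, -1, 1, 0; 4, 3, 1, -1, -1]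

def smithLeftInv : Matrix (Fin 5) (Fin 5) ℤ :=
  !![-1, 0, 0, 0, 1; 2, -1, 0, 0, -2; -4, 2, 1, 0, 4; 2, -2, 1, 1, -2; -4, 1, 0, -1, 3]

def smithRight : Matrix (Fin 5) (Fin 5) ℤ :=
  !![1, 0, 1, 1, -1; -1, 0, 0, 0, 1; 1, -1, -2, -1, -2; 1, 1, -2, -1, -1; 3, 0, 0, 1, -3]

def smithRightInv : Matrix (Fin 5) (Fin 5) ℤ :=
  !![-4, -1, -1, -1, 2; 2, 0, 0, 1, -1; 1, -2, 0, 0, -1; 0, 3, 0, 0, 1; -4, 0, -1, -1, 2]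

instance : Invertible smithLeft := invertibleOfLeftInverse _ smithLeftInv (by decide)

instance : Invertible smithRight := invertibleOfLeftInverse _ smithRightInv (by decide)

theorem smithLeft_mul_mul_smithRight :
    smithLeft * (-1 - Dmat * Dmat) * smithRight = diagonal (Fin.cons 2 fun _ => 3) := by
  decide

noncomputable def cokerKmatEquiv :
    coker Kmat ≃ₗ[ℤ] (ℤ ⧸ Ideal.span {(2 : ℤ)}) × (Fin 4 → ℤ ⧸ Ideal.span {(3 : ℤ)}) :=
  (cokerFromBlocksOneEquiv Dmat Dmat (-1)).trans <|
    (cokerEquivOfInvertible smithLeft smithRight smithLeft_mul_mul_smithRight).trans <|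
      (cokerDiagonalEquiv _).trans (Fin.consLinearEquiv ℤ fun _ => ℤ ⧸ Ideal.span {_}).symm

/-- the cokernel `ℤ¹⁰ / (ℤ-span of the columns of K)` is isomorphic as an
abelian group to `(ℤ/3ℤ)⁴ ⊕ ℤ/2ℤ`; in particular it has exactly 162 elements. -/
theorem stmt_1 :
    Nonempty ((((Fin 5 ⊕ Fin 5) → ℤ) ⧸ LinearMap.range Kmat.mulVecLin) ≃+
      ((Fin 4 → ZMod 3) × ZMod 2)) ∧
    Nat.card (((Fin 5 ⊕ Fin 5) → ℤ) ⧸ LinearMap.range Kmat.mulVecLin) = 162 := by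
  have e : coker Kmat ≃+ (Fin 4 → ZMod 3) × ZMod 2 :=
    cokerKmatEquiv.toAddEquiv.trans <| AddEquiv.prodComm.trans <|
      AddEquiv.prodCongr (AddEquiv.piCongrRight fun _ => (Int.quotientSpanEquivZMod 3).toAddEquiv)
        (Int.quotientSpanEquivZMod 2).toAddEquiv
  refine ⟨⟨e⟩, ?_⟩
  rw [Nat.card_congr e.toEquiv, Nat.card_prod, Nat.card_fun]
  simp
end

section
/- The quotient group ℤ[i]⁵ / (ℤ[i]-span of the columns of K̄) has exactly 162 elements. -/
open Matrix

/-- The Gaussian integer `i`. -/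
def gi : GaussianInt := ⟨0, 1⟩

/-- `K̄ = I₅ + i • D`, a symmetric 5×5 matrix over the Gaussian integers:
`1 + i` on the diagonal, `-i` in positions with `j - k ≡ ±1 (mod 5)`, `0` elsewhere. -/
noncomputable def Kbar : Matrix (Fin 5) (Fin 5) GaussianInt :=
  1 + gi • (Dmat.map (Int.cast : ℤ → GaussianInt))

/-!
The cokernel of an injective endomorphism of a free ℤ-module of finite rank has order `|det|`
(Smith normal form). Restricting scalars from `ℤ[i]` to `ℤ` turns the `ℤ[i]`-determinant into
its norm, so the quotient has order `N(det K̄) = |det K̄|²`, and `det K̄ = -9 + 9i` has norm 162.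
-/

open Function

namespace Zsqrtd

variable {d : ℤ}

def equivFun (d : ℤ) : ℤ√d ≃ₗ[ℤ] (Fin 2 → ℤ) where
  toFun z := ![z.re, z.im]
  invFun v := ⟨v 0, v 1⟩
  map_add' z w := by ext i; fin_cases i <;> rfl
  map_smul' n z := by ext i; fin_cases i <;> simp [zsmul_eq_mul]
  left_inv z := rfl
  right_inv v := by ext i; fin_cases i <;> rfl

@[simp] theorem equivFun_symm_apply (v : Fin 2 → ℤ) : (equivFun d).symm v = ⟨v 0, v 1⟩ :=
  rfl

noncomputable def basis (d : ℤ) : Module.Basis (Fin 2) ℤ (ℤ√d) := .ofEquivFun (equivFun d)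

@[simp] theorem basis_repr (z : ℤ√d) (i : Fin 2) : (basis d).repr z i = ![z.re, z.im] i := rfl

@[simp] theorem basis_zero : basis d 0 = 1 := by
  ext <;> simp [basis]

@[simp] theorem basis_one : basis d 1 = sqrtd := by
  ext <;> simp [basis]

instance : Module.Free ℤ (ℤ√d) := .of_basis (basis d)

instance : Module.Finite ℤ (ℤ√d) := .of_basis (basis d)

theorem algebraNorm_eq (z : ℤ√d) : Algebra.norm ℤ z = z.norm := by
  rw [Algebra.norm_eq_matrix_det (basis d), Matrix.det_fin_two]
  simp [Algebra.leftMulMatrix_eq_repr_mul, norm_def]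

end Zsqrtd

theorem LinearMap.natCard_quotient_range_eq_natAbs_det {M : Type*} [AddCommGroup M]
    [Module.Free ℤ M] [Module.Finite ℤ M] {f : M →ₗ[ℤ] M} (hf : Injective f) :
    Nat.card (M ⧸ range f) = (LinearMap.det f).natAbs :=
  (Submodule.natAbs_det_equiv (range f) (LinearEquiv.ofInjective f hf)).symm

theorem LinearMap.natCard_quotient_range_eq_natAbs_norm_det {S A : Type*} [CommRing S]
    [Module.Free ℤ S] [Module.Finite ℤ S] [AddCommGroup A] [Module S A] [Module.Free S A]
    [Module.Finite S A] {f : A →ₗ[S] A} (hf : Injective f) :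
    Nat.card (A ⧸ range f) = (Algebra.norm ℤ (LinearMap.det f)).natAbs := by
  have : Module.Free ℤ A := .trans (R := ℤ) (S := S)
  have : Module.Finite ℤ A := .trans S A
  rw [← LinearMap.det_restrictScalars,
    ← natCard_quotient_range_eq_natAbs_det (f := f.restrictScalars ℤ) hf]
  exact Nat.card_congr (Submodule.Quotient.restrictScalarsEquiv ℤ (range f)).toEquiv.symm

theorem Matrix.natCard_quotient_range_mulVecLin {n S : Type*} [Fintype n] [DecidableEq n]
    [CommRing S] [IsDomain S] [Module.Free ℤ S] [Module.Finite ℤ S] {M : Matrix n n S}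
    (hM : M.det ≠ 0) :
    Nat.card ((n → S) ⧸ LinearMap.range M.mulVecLin) = (Algebra.norm ℤ M.det).natAbs := by
  have hinj : Injective M.mulVecLin := by
    rw [← LinearMap.ker_eq_bot, LinearMap.ker_eq_bot']
    intro v hv
    by_contra hv0
    exact hM (exists_mulVec_eq_zero_iff.mp ⟨v, hv0, hv⟩)
  rw [LinearMap.natCard_quotient_range_eq_natAbs_norm_det hinj, ← toLin'_apply',
    LinearMap.det_toLin']

theorem det_Kbar : Kbar.det = ⟨-9, 9⟩ := by
  simp only [det_succ_row_zero, Fin.sum_univ_succ, det_unique, Fin.sum_univ_zero]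
  decide

/-- the quotient `ℤ[i]⁵ / (ℤ[i]-span of the columns of K̄)` has exactly
162 elements. -/
theorem stmt_2 :
    Nat.card ((Fin 5 → GaussianInt) ⧸ LinearMap.range Kbar.mulVecLin) = 162 := by
  rw [Matrix.natCard_quotient_range_mulVecLin (by rw [det_Kbar]; decide), det_Kbar,
    Zsqrtd.algebraNorm_eq]
  rfl
end

section
/- For every pair of vectors v, w ∈ ℤ⁵, the concatenated vector (v, w) ∈ ℤ¹⁰ lies in the ℤ-span of the columns of K if and only if the vector v + w·i ∈ ℤ[i]⁵ lies in the ℤ[i]-span of the columns of K̄. -/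
/-! Splitting Gaussian integers into real and imaginary parts identifies `ℤ[i]ᵐ` with `ℤᵐ ⊕ ℤᵐ`.
For integer matrices `A`, `B` one has `(A + iB)(x − iy) = (Ax + By) + i(Bx − Ay)`, so under this
identification the column map of `[[A, B], [B, −A]]` is that of `A + iB` precomposed with the
bijection `(x, y) ↦ x − iy`; in particular both maps have the same image. -/

open Matrix

namespace Zsqrtd

variable {d : ℤ}

theorem re_sum {ι : Type*} (s : Finset ι) (f : ι → ℤ√d) :
    (∑ i ∈ s, f i).re = ∑ i ∈ s, (f i).re :=
  map_sum (AddMonoidHom.mk' re re_add) f s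

theorem im_sum {ι : Type*} (s : Finset ι) (f : ι → ℤ√d) :
    (∑ i ∈ s, f i).im = ∑ i ∈ s, (f i).im :=
  map_sum (AddMonoidHom.mk' im im_add) f s

end Zsqrtd

variable {m n : Type*}

def gaussianVec : (n ⊕ n → ℤ) ≃ (n → GaussianInt) where
  toFun u j := ⟨u (Sum.inl j), u (Sum.inr j)⟩
  invFun z := Sum.elim (fun j => (z j).re) (fun j => (z j).im)
  left_inv u := by ext (j | j) <;> rfl
  right_inv z := rfl

@[simp]
theorem gaussianVec_apply_re (u : n ⊕ n → ℤ) (j : n) :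
    (gaussianVec u j).re = u (Sum.inl j) := rfl

@[simp]
theorem gaussianVec_apply_im (u : n ⊕ n → ℤ) (j : n) :
    (gaussianVec u j).im = u (Sum.inr j) := rfl

variable [Fintype n]

theorem mulVec_star_gaussianVec (A B : Matrix m n ℤ) (u : n ⊕ n → ℤ) :
    (A.map (↑) + gi • B.map (↑)) *ᵥ star (gaussianVec u) =
      gaussianVec (fromBlocks A B B (-A) *ᵥ u) := by
  ext j <;> simp [fromBlocks_mulVec, mulVec, dotProduct, Zsqrtd.re_sum, Zsqrtd.im_sum, gi,
    Finset.sum_add_distrib, add_comm]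

theorem mem_range_fromBlocks_iff (A B : Matrix m n ℤ) (t : m ⊕ m → ℤ) :
    t ∈ LinearMap.range (fromBlocks A B B (-A)).mulVecLin ↔
      gaussianVec t ∈
        LinearMap.range (A.map (↑) + gi • B.map (↑) : Matrix m n GaussianInt).mulVecLin := by
  simp only [LinearMap.mem_range, mulVecLin_apply]
  constructor
  · rintro ⟨u, rfl⟩
    exact ⟨star (gaussianVec u), mulVec_star_gaussianVec A B u⟩
  · rintro ⟨z, hz⟩
    refine ⟨gaussianVec.symm (star z), gaussianVec.injective ?_⟩
    rw [← mulVec_star_gaussianVec, Equiv.apply_symm_apply, star_star, hz]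

/-- for all `v, w ∈ ℤ⁵`, the concatenated vector `(v, w) ∈ ℤ¹⁰` lies in the
ℤ-span of the columns of `K` iff `v + w·i ∈ ℤ[i]⁵` lies in the ℤ[i]-span of the columns
of `K̄`. -/
theorem stmt_4 (v w : Fin 5 → ℤ) :
    Sum.elim v w ∈ LinearMap.range Kmat.mulVecLin ↔
      (fun j => (v j : GaussianInt) + (w j : GaussianInt) * gi) ∈
        LinearMap.range Kbar.mulVecLin := by
  have hvec : (fun j => (v j : GaussianInt) + (w j : GaussianInt) * gi) =
      gaussianVec (Sum.elim v w) := by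
    ext j <;> simp [gi]
  rw [hvec, Kbar, ← Matrix.map_one Int.cast Int.cast_zero Int.cast_one]
  exact mem_range_fromBlocks_iff 1 Dmat (Sum.elim v w)
end

section
/- For every vector C ∈ ℤ[i]⁵ there exists a vector C' ∈ ℤ⁵ (viewed inside ℤ[i]⁵, i.e., all of its entries have imaginary part zero) such that C − C' lies in the ℤ[i]-span of the columns of K̄. In other words, every firing equivalence class of chip configurations on R₁₀ contains a configuration with no imaginary chips. -/
open Matrix

/-!
Writing `K̄ = I + i D`, an integer vector `p` is sent to `p + i (D p)`, so firing along `p`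
shifts the imaginary parts of a configuration by exactly `D p`. Since `D` is invertible over
`ℤ`, choosing `p = D⁻¹ (Im C)` removes all imaginary chips.
-/

section

variable {n : Type*} [Fintype n] [DecidableEq n]

theorem im_one_add_gi_smul_mulVec_intCast (D : Matrix n n ℤ) (p : n → ℤ) (j : n) :
    (((1 + gi • D.map (Int.cast : ℤ → GaussianInt)) *ᵥ fun k => (p k : GaussianInt)) j).im =
      (D *ᵥ p) j := by
  have hmulVec : (1 + gi • D.map (Int.cast : ℤ → GaussianInt)) *ᵥ (fun k => (p k : GaussianInt)) =
      (fun k => (p k : GaussianInt)) + gi • fun k => ((D *ᵥ p) k : GaussianInt) := by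
    rw [add_mulVec, one_mulVec, smul_mulVec]
    congr 2
    funext k
    exact (RingHom.map_mulVec (Int.castRingHom GaussianInt) D p k).symm
  rw [hmulVec]
  simp [gi]

theorem exists_im_eq_zero_sub_mem_range_of_mul_eq_one {D E : Matrix n n ℤ} (hDE : D * E = 1)
    (C : n → GaussianInt) :
    ∃ C' : n → GaussianInt, (∀ j, (C' j).im = 0) ∧
      C - C' ∈ LinearMap.range (1 + gi • D.map (Int.cast : ℤ → GaussianInt)).mulVecLin := by
  set p : n → ℤ := E *ᵥ fun j => (C j).im
  refine ⟨C - (1 + gi • D.map (Int.cast : ℤ → GaussianInt)) *ᵥ fun k => (p k : GaussianInt),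
    fun j => ?_, ⟨_, by rw [mulVecLin_apply, sub_sub_cancel]⟩⟩
  have hDp : D *ᵥ p = fun j => (C j).im := by
    rw [mulVec_mulVec, hDE, one_mulVec]
  simp [im_one_add_gi_smul_mulVec_intCast, hDp]

end

/-- `D = I - A₁` and this matrix is `I - A₂`, where `A_d` is the adjacency matrix of "distance `d`"
on `ℤ/5`; with `P` the cyclic shift, `A₁ A₂ = (P + P⁻¹)(P² + P⁻²) = A₁ + A₂` as `P⁵ = 1`. -/
def DmatInv : Matrix (Fin 5) (Fin 5) ℤ :=
  !![1, 0, -1, -1, 0;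
     0, 1, 0, -1, -1;
     -1, 0, 1, 0, -1;
     -1, -1, 0, 1, 0;
     0, -1, -1, 0, 1]

theorem Dmat_mul_DmatInv : Dmat * DmatInv = 1 := by
  decide

/-- every `C ∈ ℤ[i]⁵` is firing equivalent to a configuration `C'` all of
whose entries have imaginary part zero. -/
theorem stmt_5 (C : Fin 5 → GaussianInt) :
    ∃ C' : Fin 5 → GaussianInt, (∀ j, (C' j).im = 0) ∧
      C - C' ∈ LinearMap.range Kbar.mulVecLin :=
  exists_im_eq_zero_sub_mem_range_of_mul_eq_one Dmat_mul_DmatInv C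
end

section
/- The vector (1,1,1,1,1) ∈ ℤ[i]⁵ does not lie in the ℤ[i]-span of the columns of K̄, but the vector (2,2,2,2,2) does lie in that span; hence the class of (1,1,1,1,1) is the unique element of order 2 in the quotient group ℤ[i]⁵ / (ℤ[i]-span of the columns of K̄). -/
open Matrix

/-! The quotient is read off a Smith normal form `U K̄ V = diag(1, 1, 1, 3, 3(1 - i))` (coordinates
indexed from `0`): `y` lies in the column span exactly when `3 ∣ (U y)₃` and `3(1 - i) ∣ (U y)₄`.
Since `3` is coprime to `2`, a class killed by `2` has `3 ∣ (U y)₃` and `(U y)₄ = 3c`, so it is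
determined by `c` modulo the prime `1 - i` of norm `2`; the class of `(1,1,1,1,1)`, for which
`(U y)₄ = 3`, realises the nonzero residue. -/

namespace Matrix

variable {R m m' n k : Type*} [CommSemiring R] [Fintype m] [Fintype m'] [Fintype n] [Fintype k]

theorem mem_range_mulVecLin_iff_of_mul_eq [DecidableEq m] {A : Matrix m n R}
    {U : Matrix m' m R} {U' : Matrix m m' R} {S : Matrix m' k R} {V : Matrix n k R}
    {V' : Matrix k n R} (hUA : U * A = S * V') (hAV : A * V = U' * S) (hU : U' * U = 1)
    (y : m → R) : y ∈ LinearMap.range A.mulVecLin ↔ U *ᵥ y ∈ LinearMap.range S.mulVecLin := by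
  constructor
  · rintro ⟨x, rfl⟩
    exact ⟨V' *ᵥ x, by simp only [mulVecLin_apply, mulVec_mulVec, hUA]⟩
  · rintro ⟨w, hw⟩
    refine ⟨V *ᵥ w, ?_⟩
    rw [mulVecLin_apply] at hw ⊢
    rw [mulVec_mulVec, hAV, ← mulVec_mulVec, hw, mulVec_mulVec, hU, one_mulVec]

theorem mem_range_mulVecLin_diagonal_iff [DecidableEq n] (d v : n → R) :
    v ∈ LinearMap.range (diagonal d).mulVecLin ↔ ∀ i, d i ∣ v i := by
  constructor
  · rintro ⟨x, rfl⟩ i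
    exact ⟨x i, by simp [mulVec_diagonal]⟩
  · intro h
    choose c hc using h
    exact ⟨c, funext fun i => by simp [mulVec_diagonal, hc]⟩

end Matrix

namespace GaussianInt

theorem isCoprime_three_two : IsCoprime (3 : GaussianInt) 2 :=
  ⟨1, -1, by norm_num⟩

theorem one_sub_gi_dvd_iff (z : GaussianInt) : 1 - gi ∣ z ↔ Even (z.re + z.im) := by
  constructor
  · rintro ⟨w, rfl⟩
    exact ⟨w.im, by simp [gi]; ring⟩
  · rintro ⟨t, ht⟩
    refine ⟨⟨t - z.im, t⟩, ?_⟩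
    ext <;> simp [gi]; omega

theorem one_sub_gi_dvd_or_dvd_sub_one (z : GaussianInt) : 1 - gi ∣ z ∨ 1 - gi ∣ z - 1 := by
  simp only [one_sub_gi_dvd_iff, Zsqrtd.re_sub, Zsqrtd.im_sub, Zsqrtd.re_one, Zsqrtd.im_one,
    sub_zero, sub_add_eq_add_sub]
  rcases Int.even_or_odd (z.re + z.im) with h | h
  · exact .inl h
  · exact .inr (h.sub_odd odd_one)

end GaussianInt

open GaussianInt

theorem Kbar_eq : Kbar =
    !![⟨1, 1⟩, ⟨0, -1⟩, 0, 0, ⟨0, -1⟩; ⟨0, -1⟩, ⟨1, 1⟩, ⟨0, -1⟩, 0, 0;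
      0, ⟨0, -1⟩, ⟨1, 1⟩, ⟨0, -1⟩, 0; 0, 0, ⟨0, -1⟩, ⟨1, 1⟩, ⟨0, -1⟩;
      ⟨0, -1⟩, 0, 0, ⟨0, -1⟩, ⟨1, 1⟩] := by
  funext i j
  fin_cases i <;> fin_cases j <;> simp [Kbar, Dmat, gi, one_apply] <;> decide

def kbarInvariantFactors : Fin 5 → GaussianInt := ![1, 1, 1, 3, 3 * (1 - gi)]

def kbarSmithLeft : Matrix (Fin 5) (Fin 5) GaussianInt :=
  !![⟨0, 1⟩, 0, 0, 0, 0; ⟨1, 1⟩, ⟨0, 1⟩, 0, 0, 0; ⟨2, -1⟩, ⟨1, 1⟩, ⟨0, 1⟩, 0, 0;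
    ⟨0, 4⟩, ⟨-2, 1⟩, ⟨-1, -1⟩, ⟨0, -1⟩, 0; ⟨1, -2⟩, 1, ⟨0, 1⟩, ⟨0, 1⟩, 1]

def kbarSmithLeftInv : Matrix (Fin 5) (Fin 5) GaussianInt :=
  !![⟨0, -1⟩, 0, 0, 0, 0; ⟨1, 1⟩, ⟨0, -1⟩, 0, 0, 0; ⟨0, -1⟩, ⟨1, 1⟩, ⟨0, -1⟩, 0, 0;
    0, ⟨0, -1⟩, ⟨1, 1⟩, ⟨0, 1⟩, 0; 0, 0, ⟨0, -1⟩, 1, 1]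

def kbarSmithRight : Matrix (Fin 5) (Fin 5) GaussianInt :=
  !![0, 0, 0, 0, 1; 1, 0, 0, -1, ⟨0, 1⟩; 0, 1, 0, ⟨-1, 1⟩, ⟨0, 1⟩;
    0, 0, 1, ⟨1, 2⟩, 1; 0, 0, 0, 1, ⟨1, -2⟩]

def kbarSmithRightInv : Matrix (Fin 5) (Fin 5) GaussianInt :=
  !![⟨-1, 1⟩, 1, 0, 0, 1; ⟨1, 2⟩, 0, 1, 0, ⟨1, -1⟩; ⟨4, 0⟩, 0, 0, 1, ⟨-1, -2⟩;
    ⟨-1, 2⟩, 0, 0, 0, 1; 1, 0, 0, 0, 0]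

theorem kbarSmithLeft_mul_Kbar :
    kbarSmithLeft * Kbar = diagonal kbarInvariantFactors * kbarSmithRightInv := by
  rw [Kbar_eq]; decide

theorem Kbar_mul_kbarSmithRight :
    Kbar * kbarSmithRight = kbarSmithLeftInv * diagonal kbarInvariantFactors := by
  rw [Kbar_eq]; decide

theorem kbarSmithLeftInv_mul_kbarSmithLeft : kbarSmithLeftInv * kbarSmithLeft = 1 := by
  decide

theorem mem_range_Kbar_iff (y : Fin 5 → GaussianInt) :
    y ∈ LinearMap.range Kbar.mulVecLin ↔
      3 ∣ (kbarSmithLeft *ᵥ y) 3 ∧ 3 * (1 - gi) ∣ (kbarSmithLeft *ᵥ y) 4 := by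
  rw [mem_range_mulVecLin_iff_of_mul_eq kbarSmithLeft_mul_Kbar Kbar_mul_kbarSmithRight
    kbarSmithLeftInv_mul_kbarSmithLeft, mem_range_mulVecLin_diagonal_iff]
  simp [Fin.forall_fin_succ, kbarInvariantFactors]

theorem kbarSmithLeft_mulVec_one :
    (kbarSmithLeft *ᵥ fun _ => 1) 3 = 3 * ⟨-1, 1⟩ ∧ (kbarSmithLeft *ᵥ fun _ => 1) 4 = 3 := by
  decide

theorem one_notMem_range_Kbar : (fun _ => 1) ∉ LinearMap.range Kbar.mulVecLin := by
  rw [mem_range_Kbar_iff, kbarSmithLeft_mulVec_one.2]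
  rintro ⟨-, h⟩
  have h₁ : 1 - gi ∣ 1 :=
    (mul_dvd_mul_iff_left (by decide : (3 : GaussianInt) ≠ 0)).1 (by rwa [mul_one])
  simp [one_sub_gi_dvd_iff] at h₁

theorem two_mem_range_Kbar : (fun _ => 2) ∈ LinearMap.range Kbar.mulVecLin := by
  rw [mem_range_Kbar_iff]
  exact ⟨⟨⟨-2, 2⟩, by decide⟩, ⟨⟨1, 1⟩, by decide⟩⟩

theorem mem_range_Kbar_or_sub_one_of_two_nsmul_mem {y : Fin 5 → GaussianInt}
    (h : 2 • y ∈ LinearMap.range Kbar.mulVecLin) :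
    y ∈ LinearMap.range Kbar.mulVecLin ∨ (y - fun _ => 1) ∈ LinearMap.range Kbar.mulVecLin := by
  rw [mem_range_Kbar_iff, mulVec_smul] at h
  simp only [Pi.smul_apply, nsmul_eq_mul, Nat.cast_ofNat] at h
  obtain ⟨h₃, h₄⟩ := h
  have ha := isCoprime_three_two.dvd_of_dvd_mul_left h₃
  obtain ⟨c, hc⟩ := isCoprime_three_two.dvd_of_dvd_mul_left ((dvd_mul_right 3 _).trans h₄)
  rw [mem_range_Kbar_iff, mem_range_Kbar_iff, mulVec_sub, Pi.sub_apply, Pi.sub_apply,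
    kbarSmithLeft_mulVec_one.1, kbarSmithLeft_mulVec_one.2, hc, ← mul_sub_one]
  rcases one_sub_gi_dvd_or_dvd_sub_one c with hc' | hc'
  · exact .inl ⟨ha, mul_dvd_mul_left 3 hc'⟩
  · exact .inr ⟨dvd_sub ha (dvd_mul_right _ _), mul_dvd_mul_left 3 hc'⟩

/-- `(1,1,1,1,1)` is not in the ℤ[i]-span of the columns of `K̄`, while
`(2,2,2,2,2)` is; hence the class of `(1,1,1,1,1)` is the unique element of order 2 in
the quotient group. -/
theorem stmt_7 :
    (fun _ => (1 : GaussianInt)) ∉ LinearMap.range Kbar.mulVecLin ∧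
    (fun _ => (2 : GaussianInt)) ∈ LinearMap.range Kbar.mulVecLin ∧
    ∀ x : (Fin 5 → GaussianInt) ⧸ LinearMap.range Kbar.mulVecLin,
      addOrderOf x = 2 ↔
        x = Submodule.Quotient.mk (fun _ => (1 : GaussianInt)) := by
  refine ⟨one_notMem_range_Kbar, two_mem_range_Kbar, fun x => ?_⟩
  obtain ⟨y, rfl⟩ := Submodule.Quotient.mk_surjective _ x
  rw [addOrderOf_eq_prime_iff, ← Submodule.Quotient.mk_smul, Ne, Submodule.Quotient.mk_eq_zero,
    Submodule.Quotient.mk_eq_zero, Submodule.Quotient.eq]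
  constructor
  · rintro ⟨h₂, hy⟩
    exact (mem_range_Kbar_or_sub_one_of_two_nsmul_mem h₂).resolve_left hy
  · intro h
    refine ⟨?_, fun hy => one_notMem_range_Kbar ?_⟩
    · have h₂ : 2 • y = 2 • (y - fun _ => 1) + fun _ => 2 := by
        funext i
        rw [Pi.add_apply, Pi.smul_apply, Pi.smul_apply, Pi.sub_apply, two_nsmul, two_nsmul]
        ring
      rw [h₂]
      exact add_mem (nsmul_mem h 2) two_mem_range_Kbar
    · simpa using sub_mem hy h
end

section
/- For every vector x ∈ ℤ[i]⁵ lying in the ℤ[i]-span of the columns of K̄, the integer Σ_{j=0}^{4} (Re(x_j) + Im(x_j)) is even. -/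
open Matrix

lemma colsum (k : Fin 5) : ∑ j : Fin 5, Kbar j k = ⟨1, -1⟩ := by
  have hD : ∀ j k : Fin 5, Dmat j k = (!![1,-1,0,0,-1;-1,1,-1,0,0;0,-1,1,-1,0;0,0,-1,1,-1;-1,0,0,-1,1] : Matrix (Fin 5) (Fin 5) ℤ) j k := by
    intro j k; fin_cases j <;> fin_cases k <;> decide
  fin_cases k <;>
    simp [Kbar, Fin.sum_univ_five, Matrix.add_apply, Matrix.one_apply, Matrix.smul_apply,
      Matrix.map_apply, hD, gi, Zsqrtd.ext_iff] <;> rfl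

/-- The "total chips" additive hom. -/
def chips : GaussianInt →+ ℤ where
  toFun z := z.re + z.im
  map_zero' := rfl
  map_add' a b := by simp [Zsqrtd.add_def]; ring

/-- every vector `x` in the ℤ[i]-span of the columns of `K̄` has an even
total number of chips `∑ j, (Re (x j) + Im (x j))`. -/
theorem stmt_10 (x : Fin 5 → GaussianInt)
    (hx : x ∈ LinearMap.range Kbar.mulVecLin) :
    Even (∑ j : Fin 5, ((x j).re + (x j).im)) := by
  obtain ⟨c, rfl⟩ := hx
  have h : ∑ j : Fin 5, (Kbar.mulVecLin c) j = (⟨1,-1⟩ : GaussianInt) * ∑ k : Fin 5, c k := by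
    simp only [Matrix.mulVecLin_apply, Matrix.mulVec, dotProduct]
    rw [Finset.sum_comm, Finset.mul_sum]
    refine Finset.sum_congr rfl fun k _ => ?_
    rw [← Finset.sum_mul, colsum]
  have key : ∑ j : Fin 5, (((Kbar.mulVecLin c) j).re + ((Kbar.mulVecLin c) j).im)
      = chips (∑ j : Fin 5, (Kbar.mulVecLin c) j) := (map_sum chips _ _).symm
  rw [key, h]
  refine ⟨(∑ k : Fin 5, c k).im, ?_⟩
  rw [show ∀ z, chips z = z.re + z.im from fun _ => rfl]
  simp [chips, Zsqrtd.re_mul, Zsqrtd.im_mul]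
  ring
end
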